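/- Geodesic coalescence: fix u, u', v, v' ∈ H with Π(u;v) ≠ ∅ and Π(u';v') ≠ ∅, and let Γ_{u;v} : u → v and Γ_{u';v'} : u' → v' be the left-most geodesics. Then almost surely the following holds: if Γ_{u;v}(r) = Γ_{u';v'}(r) for some height r in both domains, and Γ_{u;v}(s) ≠ Γ_{u';v'}(s) for some height s > r in both domains, then Γ_{u;v}(t) ≠ Γ_{u';v'}(t) for all heights t ≥ s in both domains. Equivalently, the intersection Γ_{u;v} ∩ Γ_{u';v'} is a connected subset of H. -/

import Mathlib

open MeasureTheory ProbabilityTheory Filter Asymptotics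

namespace HalfSpacePolymer

/-- A directed path in the half-space `H = {(x,t) ∈ ℤ² : x ≥ 0}` from `(x₁,t₁)` to `(x₂,t₂)`,
with increments `(±1, 1)`, identified with a function `ℤ → ℤ≥0` of the height coordinate
(frozen outside `⟦t₁, t₂⟧`). -/
structure HSPath (x₁ t₁ x₂ t₂ : ℤ) where
  f : ℤ → ℤ
  nonneg : ∀ t : ℤ, 0 ≤ f t
  eq_left : ∀ t : ℤ, t ≤ t₁ → f t = x₁
  eq_right : ∀ t : ℤ, t₂ ≤ t → f t = x₂
  step : ∀ t : ℤ, t₁ ≤ t → t < t₂ → f (t + 1) = f t + 1 ∨ f (t + 1) = f t - 1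

instance (x₁ t₁ x₂ t₂ : ℤ) : MeasurableSpace (HSPath x₁ t₁ x₂ t₂) := ⊤

/-- A full-space directed path in `ℤ²` (increments `(±1,1)`, not confined to the half-space). -/
structure FPath (x₁ t₁ x₂ t₂ : ℤ) where
  f : ℤ → ℤ
  eq_left : ∀ t : ℤ, t ≤ t₁ → f t = x₁
  eq_right : ∀ t : ℤ, t₂ ≤ t → f t = x₂
  step : ∀ t : ℤ, t₁ ≤ t → t < t₂ → f (t + 1) = f t + 1 ∨ f (t + 1) = f t - 1

/-- The Hamiltonian (energy) of a half-space path in the environment `wt`. -/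
noncomputable def energy (wt : ℤ × ℤ → ℝ) {x₁ t₁ x₂ t₂ : ℤ} (π : HSPath x₁ t₁ x₂ t₂) : ℝ :=
  ∑ s ∈ Finset.Icc t₁ t₂, wt (π.f s, s)

/-- The Hamiltonian (energy) of a full-space path in the environment `wt`. -/
noncomputable def energyF (wt : ℤ × ℤ → ℝ) {x₁ t₁ x₂ t₂ : ℤ} (π : FPath x₁ t₁ x₂ t₂) : ℝ :=
  ∑ s ∈ Finset.Icc t₁ t₂, wt (π.f s, s)

/-- Partition function of the half-space polymer. -/
noncomputable def Zfun (wt : ℤ × ℤ → ℝ) (x₁ t₁ x₂ t₂ : ℤ) : ℝ :=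
  ∑' π : HSPath x₁ t₁ x₂ t₂, Real.exp (energy wt π)

/-- Free energy of the half-space polymer. -/
noncomputable def freeEnergy (wt : ℤ × ℤ → ℝ) (x₁ t₁ x₂ t₂ : ℤ) : ℝ :=
  Real.log (Zfun wt x₁ t₁ x₂ t₂)

/-- Last passage time of the half-space model. -/
noncomputable def lpp (wt : ℤ × ℤ → ℝ) (x₁ t₁ x₂ t₂ : ℤ) : ℝ :=
  ⨆ π : HSPath x₁ t₁ x₂ t₂, energy wt π

/-- Free energy of the full-space polymer. -/
noncomputable def freeEnergyF (wt : ℤ × ℤ → ℝ) (x₁ t₁ x₂ t₂ : ℤ) : ℝ :=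
  Real.log (∑' π : FPath x₁ t₁ x₂ t₂, Real.exp (energyF wt π))

/-- Last passage time of the full-space model. -/
noncomputable def lppF (wt : ℤ × ℤ → ℝ) (x₁ t₁ x₂ t₂ : ℤ) : ℝ :=
  ⨆ π : FPath x₁ t₁ x₂ t₂, energyF wt π

/-- Quenched polymer (Gibbs) probability of a set `A` of paths. -/
noncomputable def polyQ (wt : ℤ × ℤ → ℝ) (x₁ t₁ x₂ t₂ : ℤ)
    (A : Set (HSPath x₁ t₁ x₂ t₂)) : ℝ :=
  (∑' π : A, Real.exp (energy wt π.1)) / Zfun wt x₁ t₁ x₂ t₂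

/-- The quenched polymer measure, as a measure on the set of paths. -/
noncomputable def polyMeasure (wt : ℤ × ℤ → ℝ) (x₁ t₁ x₂ t₂ : ℤ) :
    Measure (HSPath x₁ t₁ x₂ t₂) :=
  (ENNReal.ofReal (Zfun wt x₁ t₁ x₂ t₂))⁻¹ •
    Measure.sum fun π : HSPath x₁ t₁ x₂ t₂ =>
      ENNReal.ofReal (Real.exp (energy wt π)) • Measure.dirac π

/-- A geodesic: a path of maximal energy among paths with the same endpoints. -/
def IsGeodesic (wt : ℤ × ℤ → ℝ) {x₁ t₁ x₂ t₂ : ℤ} (π : HSPath x₁ t₁ x₂ t₂) : Prop :=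
  ∀ π' : HSPath x₁ t₁ x₂ t₂, energy wt π' ≤ energy wt π

/-- The left-most geodesic. -/
def IsLeftmostGeodesic (wt : ℤ × ℤ → ℝ) {x₁ t₁ x₂ t₂ : ℤ} (π : HSPath x₁ t₁ x₂ t₂) : Prop :=
  IsGeodesic wt π ∧
    ∀ π' : HSPath x₁ t₁ x₂ t₂, IsGeodesic wt π' → ∀ t : ℤ, π.f t ≤ π'.f t

/-- The random environment data: a half-space environment `w` (vertical weights on `x = 0`
distributed as `μvt`, bulk weights as `μbk`), together with a coupled bulk (i.i.d.) environment
`wbk` agreeing with `w` off the vertical axis; all weights are jointly independent, almost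
surely positive, subexponential, and of unbounded support. -/
structure EnvData (Ω : Type*) [MeasurableSpace Ω] (P : Measure Ω) where
  w : ℤ × ℤ → Ω → ℝ
  wbk : ℤ × ℤ → Ω → ℝ
  μbk : Measure ℝ
  μvt : Measure ℝ
  prob_bk : IsProbabilityMeasure μbk
  prob_vt : IsProbabilityMeasure μvt
  meas_w : ∀ v : ℤ × ℤ, Measurable (w v)
  meas_wbk : ∀ v : ℤ × ℤ, Measurable (wbk v)
  agree : ∀ v : ℤ × ℤ, v.1 ≠ 0 → wbk v = w v
  law_w_bulk : ∀ v : ℤ × ℤ, v.1 ≠ 0 → P.map (w v) = μbk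
  law_w_vert : ∀ t : ℤ, P.map (w (0, t)) = μvt
  law_wbk : ∀ v : ℤ × ℤ, P.map (wbk v) = μbk
  indep : @iIndepFun Ω ((ℤ × ℤ) ⊕ ℤ) _ (fun _ => ℝ)
    (fun _ : (ℤ × ℤ) ⊕ ℤ => (inferInstance : MeasurableSpace ℝ))
    (Sum.elim w fun t : ℤ => wbk (0, t)) P
  pos_bk : μbk (Set.Iic 0) = 0
  pos_vt : μvt (Set.Iic 0) = 0
  subexp_bk : ∃ z : ℝ, 0 < z ∧ Integrable (fun x => Real.exp (z * x)) μbk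
  subexp_vt : ∃ z : ℝ, 0 < z ∧ Integrable (fun x => Real.exp (z * x)) μvt
  unbdd_bk : ∀ z : ℝ, 0 < μbk (Set.Ioi z)
  unbdd_vt : ∀ z : ℝ, 0 < μvt (Set.Ioi z)

variable {Ω : Type*} [MeasurableSpace Ω] {P : Measure Ω}

/-- `G(x₁,t₁;x₂,t₂)` in the half-space environment: the last passage time if `zt = true`
(zero temperature), the free energy if `zt = false` (positive temperature). -/
noncomputable def Ghs (E : EnvData Ω P) (zt : Bool) (x₁ t₁ x₂ t₂ : ℤ) (e : Ω) : ℝ :=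
  if zt then lpp (fun v => E.w v e) x₁ t₁ x₂ t₂ else freeEnergy (fun v => E.w v e) x₁ t₁ x₂ t₂

/-- `G^bk(x₁,t₁;x₂,t₂)`: half-space paths in the bulk (i.i.d.) environment. -/
noncomputable def Gbk (E : EnvData Ω P) (zt : Bool) (x₁ t₁ x₂ t₂ : ℤ) (e : Ω) : ℝ :=
  if zt then lpp (fun v => E.wbk v e) x₁ t₁ x₂ t₂
  else freeEnergy (fun v => E.wbk v e) x₁ t₁ x₂ t₂

/-- `G^bk_f(x₁,t₁;x₂,t₂)`: full-space paths in the bulk (i.i.d.) environment. -/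
noncomputable def GbkF (E : EnvData Ω P) (zt : Bool) (x₁ t₁ x₂ t₂ : ℤ) (e : Ω) : ℝ :=
  if zt then lppF (fun v => E.wbk v e) x₁ t₁ x₂ t₂
  else freeEnergyF (fun v => E.wbk v e) x₁ t₁ x₂ t₂

/-- Mean of `G(x₁,t₁;x₂,t₂)` over the environment. -/
noncomputable def meanG (E : EnvData Ω P) (zt : Bool) (x₁ t₁ x₂ t₂ : ℤ) : ℝ :=
  ∫ e, Ghs E zt x₁ t₁ x₂ t₂ e ∂P

/-- Mean of `G^bk(x₁,t₁;x₂,t₂)` over the environment. -/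
noncomputable def meanGbk (E : EnvData Ω P) (zt : Bool) (x₁ t₁ x₂ t₂ : ℤ) : ℝ :=
  ∫ e, Gbk E zt x₁ t₁ x₂ t₂ e ∂P

/-- `g` and `g^bk` are the laws of large numbers of `G(0,0;0,n)` and `G^bk(0,0;0,n)`
along even `n` (these limits exist by superadditivity). -/
def HasLLN (E : EnvData Ω P) (zt : Bool) (g gbk : ℝ) : Prop :=
  Tendsto (fun n : ℕ => (∫ e, Ghs E zt 0 0 0 (2 * (n : ℤ)) e ∂P) / (2 * (n : ℝ)))
      atTop (nhds g) ∧
    Tendsto (fun n : ℕ => (∫ e, Gbk E zt 0 0 0 (2 * (n : ℤ)) e ∂P) / (2 * (n : ℝ)))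
      atTop (nhds gbk)

/-- LLN separation: `g > g^bk`. -/
def LLNSep (E : EnvData Ω P) (zt : Bool) : Prop :=
  ∃ g gbk : ℝ, HasLLN E zt g gbk ∧ gbk < g

/-- Number of blocks: `N = sup {i : iK + J ≤ n}` for `n = 2m + 4`. -/
noncomputable def Nblk (J K : ℕ → ℤ) (m : ℕ) : ℕ :=
  sSup {i : ℕ | (i : ℤ) * K m + J m ≤ 2 * (m : ℤ) + 4}

/-- Block boundaries: `m₀ = 0`, `mᵢ = iK + J` for `1 ≤ i ≤ N`, `m_{N+1} = n = 2m + 4`. -/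
noncomputable def mpt (J K : ℕ → ℤ) (m : ℕ) (i : ℕ) : ℤ :=
  if i = 0 then 0 else if i ≤ Nblk J K m then (i : ℤ) * K m + J m else 2 * (m : ℤ) + 4

/-- The block free energies `Gᵢ⁰ = G(0,mᵢ;0,m_{i+1}) − ω(0,m_{i+1})` for `i < N`, and
`G_N⁰ = G(0,m_N;0,n)`. -/
noncomputable def Gblk (E : EnvData Ω P) (zt : Bool) (J K : ℕ → ℤ) (m i : ℕ) (e : Ω) : ℝ :=
  Ghs E zt 0 (mpt J K m i) 0 (mpt J K m (i + 1)) e -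
    (if i < Nblk J K m then E.w (0, mpt J K m (i + 1)) e else 0)

/-- Constraints on the block scales `J, K` for `n = 2m + 4`: `J, K` even,
`J^{1/4} ∈ [(log n)^{5/4}, 2 (log n)^{5/4}]` and `K ∈ [n^{0.9}, 2 n^{0.9}]`. -/
def BlockScales (J K : ℕ → ℤ) : Prop :=
  ∀ m : ℕ,
    Even (J m) ∧ Even (K m) ∧
    (Real.log (2 * (m : ℝ) + 4)) ^ ((5 : ℝ) / 4) ≤ ((J m : ℝ)) ^ ((1 : ℝ) / 4) ∧
    ((J m : ℝ)) ^ ((1 : ℝ) / 4) ≤ 2 * (Real.log (2 * (m : ℝ) + 4)) ^ ((5 : ℝ) / 4) ∧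
    (2 * (m : ℝ) + 4) ^ ((0.9 : ℝ)) ≤ (K m : ℝ) ∧
    (K m : ℝ) ≤ 2 * (2 * (m : ℝ) + 4) ^ ((0.9 : ℝ))

/-- The normalized triangular array `X_{N,i}` built from the block free energies. -/
noncomputable def Xblk (E : EnvData Ω P) (zt : Bool) (J K : ℕ → ℤ) (σ : ℕ → ℝ)
    (m i : ℕ) (e : Ω) : ℝ :=
  (Ghs E zt 0 (mpt J K m i) 0 (mpt J K m (i + 1)) e -
      ∫ e', Ghs E zt 0 (mpt J K m i) 0 (mpt J K m (i + 1)) e' ∂P) /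
    (σ m * Real.sqrt ((Nblk J K m : ℝ) * (K m : ℝ)))

/-! Where two left-most geodesics `Γ`, `Γ'` meet at heights `r` and `t`, replace `Γ` on `⟦r, t⟧`
by `min Γ Γ'` and `Γ'` by `max Γ Γ'`. Two paths meeting at `r` stay at even distance, so these are
again paths, and their energies add up to `H(Γ) + H(Γ')`. As `Γ'` is a geodesic, the min-spliced
path is then a geodesic as well, and left-mostness of `Γ` gives `Γ ≤ Γ'` on `⟦r, t⟧`; by symmetry
the two geodesics agree on all of `⟦r, t⟧`, so they cannot part at `s` and meet again later. -/

def HasUnitSteps (g : ℤ → ℤ) (r t : ℤ) : Prop :=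
  ∀ s, r ≤ s → s < t → g (s + 1) = g s + 1 ∨ g (s + 1) = g s - 1

namespace HasUnitSteps

variable {f g : ℤ → ℤ} {r t : ℤ}

theorem mono {r' t' : ℤ} (h : HasUnitSteps g r t) (hr : r ≤ r') (ht : t' ≤ t) :
    HasUnitSteps g r' t' :=
  fun s hs hs' => h s (hr.trans hs) (hs'.trans_le ht)

theorem even_sub (hf : HasUnitSteps f r t) (hg : HasUnitSteps g r t) (hfg : f r = g r) :
    ∀ s, r ≤ s → s ≤ t → Even (f s - g s) := by
  refine Int.leInduction (by simp [hfg]) fun s hrs ih hst => ?_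
  have := ih (by omega)
  rw [Int.even_iff] at this ⊢
  rcases hf s hrs (by omega) with h | h <;> rcases hg s hrs (by omega) with h' | h' <;> omega

theorem inf (hf : HasUnitSteps f r t) (hg : HasUnitSteps g r t) (hfg : f r = g r) :
    HasUnitSteps (f ⊓ g) r t := fun s hrs hst => by
  have := Int.even_iff.mp (hf.even_sub hg hfg s hrs hst.le)
  simp only [Pi.inf_apply]
  rcases hf s hrs hst with h | h <;> rcases hg s hrs hst with h' | h' <;> omega

theorem sup (hf : HasUnitSteps f r t) (hg : HasUnitSteps g r t) (hfg : f r = g r) :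
    HasUnitSteps (f ⊔ g) r t := fun s hrs hst => by
  have := Int.even_iff.mp (hf.even_sub hg hfg s hrs hst.le)
  simp only [Pi.sup_apply]
  rcases hf s hrs hst with h | h <;> rcases hg s hrs hst with h' | h' <;> omega

end HasUnitSteps

namespace HSPath

variable {x₁ t₁ x₂ t₂ : ℤ}

theorem hasUnitSteps (Γ : HSPath x₁ t₁ x₂ t₂) : HasUnitSteps Γ.f t₁ t₂ := Γ.step

def splice (Γ : HSPath x₁ t₁ x₂ t₂) (g : ℤ → ℤ) {r t : ℤ} (hr : t₁ ≤ r) (ht : t ≤ t₂)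
    (hg : ∀ s, 0 ≤ g s) (hgr : g r = Γ.f r) (hgt : g t = Γ.f t) (hsteps : HasUnitSteps g r t) :
    HSPath x₁ t₁ x₂ t₂ where
  f s := if r ≤ s ∧ s ≤ t then g s else Γ.f s
  nonneg s := by split_ifs; exacts [hg s, Γ.nonneg s]
  eq_left s hs := by
    split_ifs with h
    · rw [show s = r by omega, hgr, Γ.eq_left r (by omega)]
    · exact Γ.eq_left s hs
  eq_right s hs := by
    split_ifs with h
    · rw [show s = t by omega, hgt, Γ.eq_right t (by omega)]
    · exact Γ.eq_right s hs
  step s hs hs' := by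
    split_ifs with h₁ h₂ h₂
    · exact hsteps s h₂.1 (by omega)
    · rw [← show s + 1 = r by omega] at hgr
      rw [hgr]; exact Γ.step s hs hs'
    · rw [show s = t by omega, hgt]; exact Γ.step t (by omega) (by omega)
    · exact Γ.step s hs hs'

theorem energy_splice (wt : ℤ × ℤ → ℝ) (Γ : HSPath x₁ t₁ x₂ t₂) (g : ℤ → ℤ) {r t : ℤ}
    (hr : t₁ ≤ r) (ht : t ≤ t₂) (hg : ∀ s, 0 ≤ g s) (hgr : g r = Γ.f r) (hgt : g t = Γ.f t)
    (hsteps : HasUnitSteps g r t) :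
    energy wt (Γ.splice g hr ht hg hgr hgt hsteps) =
      energy wt Γ + ∑ s ∈ Finset.Icc r t, (wt (g s, s) - wt (Γ.f s, s)) := by
  calc energy wt (Γ.splice g hr ht hg hgr hgt hsteps)
      = ∑ s ∈ Finset.Icc t₁ t₂, (wt (Γ.f s, s) +
          if s ∈ Finset.Icc r t then wt (g s, s) - wt (Γ.f s, s) else 0) := by
        refine Finset.sum_congr rfl fun s _ => ?_
        simp only [splice, Finset.mem_Icc]
        split_ifs <;> ring
    _ = energy wt Γ + ∑ s ∈ Finset.Icc t₁ t₂ ∩ Finset.Icc r t, (wt (g s, s) - wt (Γ.f s, s)) := by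
        rw [Finset.sum_add_distrib, Finset.sum_ite_mem, energy]
    _ = energy wt Γ + ∑ s ∈ Finset.Icc r t, (wt (g s, s) - wt (Γ.f s, s)) := by
        rw [Finset.inter_eq_right.mpr (Finset.Icc_subset_Icc hr ht)]

end HSPath

section Geodesics

variable {wt : ℤ × ℤ → ℝ} {x₁ t₁ x₂ t₂ y₁ u₁ y₂ u₂ : ℤ}

theorem IsLeftmostGeodesic.le_on_Icc_of_eq_of_eq
    {Γ : HSPath x₁ t₁ x₂ t₂} {Γ' : HSPath y₁ u₁ y₂ u₂}
    (hΓ : IsLeftmostGeodesic wt Γ) (hΓ' : IsGeodesic wt Γ') {r t : ℤ}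
    (hrt₁ : t₁ ≤ r) (htt₂ : t ≤ t₂) (hru₁ : u₁ ≤ r) (htu₂ : t ≤ u₂)
    (heqr : Γ.f r = Γ'.f r) (heqt : Γ.f t = Γ'.f t) :
    ∀ s ∈ Set.Icc r t, Γ.f s ≤ Γ'.f s := by
  have hsteps := Γ.hasUnitSteps.mono hrt₁ htt₂
  have hsteps' := Γ'.hasUnitSteps.mono hru₁ htu₂
  let lower := Γ.splice (Γ.f ⊓ Γ'.f) hrt₁ htt₂ (fun s => le_inf (Γ.nonneg s) (Γ'.nonneg s))
    (by simp [heqr]) (by simp [heqt]) (hsteps.inf hsteps' heqr)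
  let upper := Γ'.splice (Γ.f ⊔ Γ'.f) hru₁ htu₂ (fun s => (Γ.nonneg s).trans le_sup_left)
    (by simp [heqr]) (by simp [heqt]) (hsteps.sup hsteps' heqr)
  have hsum : energy wt lower + energy wt upper = energy wt Γ + energy wt Γ' := by
    have hswap : ∀ s, wt ((Γ.f ⊓ Γ'.f) s, s) + wt ((Γ.f ⊔ Γ'.f) s, s) =
        wt (Γ.f s, s) + wt (Γ'.f s, s) := fun s => by
      rcases le_total (Γ.f s) (Γ'.f s) with h | h <;> simp [h, add_comm]
    rw [HSPath.energy_splice, HSPath.energy_splice, add_add_add_comm, ← Finset.sum_add_distrib,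
      Finset.sum_eq_zero fun s _ => by linarith [hswap s], add_zero]
  have hlower : IsGeodesic wt lower := fun π =>
    (hΓ.1 π).trans (by linarith [hΓ' upper])
  intro s hs
  calc Γ.f s ≤ lower.f s := hΓ.2 lower hlower s
    _ = min (Γ.f s) (Γ'.f s) := if_pos hs
    _ ≤ Γ'.f s := min_le_right _ _

theorem IsLeftmostGeodesic.eqOn_Icc_of_eq_of_eq
    {Γ : HSPath x₁ t₁ x₂ t₂} {Γ' : HSPath y₁ u₁ y₂ u₂}
    (hΓ : IsLeftmostGeodesic wt Γ) (hΓ' : IsLeftmostGeodesic wt Γ') {r t : ℤ}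
    (hrt₁ : t₁ ≤ r) (htt₂ : t ≤ t₂) (hru₁ : u₁ ≤ r) (htu₂ : t ≤ u₂)
    (heqr : Γ.f r = Γ'.f r) (heqt : Γ.f t = Γ'.f t) :
    Set.EqOn Γ.f Γ'.f (Set.Icc r t) := fun s hs =>
  le_antisymm (hΓ.le_on_Icc_of_eq_of_eq hΓ'.1 hrt₁ htt₂ hru₁ htu₂ heqr heqt s hs)
    (hΓ'.le_on_Icc_of_eq_of_eq hΓ.1 hru₁ htu₂ hrt₁ htt₂ heqr.symm heqt.symm s hs)

end Geodesics

theorem geodesic_coalescence_general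
    {Ω : Type*} [MeasurableSpace Ω] (P : Measure Ω)
    (E : EnvData Ω P) (x₁ t₁ x₂ t₂ y₁ u₁ y₂ u₂ : ℤ) :
    ∀ᵐ e ∂P, ∀ (Γ : HSPath x₁ t₁ x₂ t₂) (Γ' : HSPath y₁ u₁ y₂ u₂),
      IsLeftmostGeodesic (fun v => E.w v e) Γ →
      IsLeftmostGeodesic (fun v => E.w v e) Γ' →
      ∀ r s : ℤ, t₁ ≤ r → r ≤ t₂ → u₁ ≤ r → r ≤ u₂ →
        t₁ ≤ s → s ≤ t₂ → u₁ ≤ s → s ≤ u₂ → r < s →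
        Γ.f r = Γ'.f r → Γ.f s ≠ Γ'.f s →
        ∀ t : ℤ, t₁ ≤ t → t ≤ t₂ → u₁ ≤ t → t ≤ u₂ → s ≤ t → Γ.f t ≠ Γ'.f t := by
  refine Eventually.of_forall fun e Γ Γ' hΓ hΓ' r s hrt₁ _ hru₁ _ _ _ _ _ hrs heqr hne ↦ ?_
  intro t _ ht₂ _ hu₂ hst heqt
  exact hne (hΓ.eqOn_Icc_of_eq_of_eq hΓ' hrt₁ ht₂ hru₁ hu₂ heqr heqt ⟨hrs.le, hst⟩)

/-- **Geodesic coalescence.** Almost surely, if two left-most geodesics agree at some common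
height `r` and disagree at some common height `s > r`, then they disagree at every common
height `t ≥ s`; i.e. their intersection is a connected subset of `H`. -/
theorem geodesic_coalescence
    {Ω : Type*} [MeasurableSpace Ω] (P : Measure Ω) [IsProbabilityMeasure P]
    (E : EnvData Ω P) (x₁ t₁ x₂ t₂ y₁ u₁ y₂ u₂ : ℤ)
    (hx₁ : 0 ≤ x₁) (hx₂ : 0 ≤ x₂) (hy₁ : 0 ≤ y₁) (hy₂ : 0 ≤ y₂)
    (h1 : Nonempty (HSPath x₁ t₁ x₂ t₂)) (h2 : Nonempty (HSPath y₁ u₁ y₂ u₂)) :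
    ∀ᵐ e ∂P, ∀ (Γ : HSPath x₁ t₁ x₂ t₂) (Γ' : HSPath y₁ u₁ y₂ u₂),
      IsLeftmostGeodesic (fun v => E.w v e) Γ →
      IsLeftmostGeodesic (fun v => E.w v e) Γ' →
      ∀ r s : ℤ, t₁ ≤ r → r ≤ t₂ → u₁ ≤ r → r ≤ u₂ →
        t₁ ≤ s → s ≤ t₂ → u₁ ≤ s → s ≤ u₂ → r < s →
        Γ.f r = Γ'.f r → Γ.f s ≠ Γ'.f s →
        ∀ t : ℤ, t₁ ≤ t → t ≤ t₂ → u₁ ≤ t → t ≤ u₂ → s ≤ t → Γ.f t ≠ Γ'.f t :=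
  geodesic_coalescence_general P E x₁ t₁ x₂ t₂ y₁ u₁ y₂ u₂
end HalfSpacePolymer
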